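/- (Infinite-dimensional Olson's identity, vanishing and diagonal cases.) Let X be a finite set, m, n ≥ 1, l = m+n, and f : X^l → ℝ a symmetric function. For i ≥ 1, consider the operator T_i := Σ_{k=1}^{n} S(k+m, i) ∘ Sym_{m+k}(Id^{(m)} ⊗ s(n,k)) mapping symmetric functions on X^l to symmetric functions on X^i (where Id^{(m)} ⊗ s(n,k) applies s(n,k) to the last n variables and Sym symmetrizes). Then: (a) T_i f = 0 whenever i < n or i > l; and (b) for i = n, (T_n f)(x₁,…,x_n) = Σ_{j₁=1}^{n} ⋯ Σ_{j_m=1}^{n} f(x₁,…,x_n, x_{j₁},…,x_{j_m}). -/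

import Mathlib

open Finset

section Defs

variable {X : Type*} [Fintype X] [DecidableEq X]

/-- The falling factorial measure `(ω)_n` on `X^n`, given by the density
`(ω)_n(y₁,…,y_n) = ω(y₁)(ω(y₂)−δ_{y₁}(y₂))⋯(ω(y_n)−δ_{y₁}(y_n)−⋯−δ_{y_{n−1}}(y_n))`. -/
noncomputable def ff (ω : X → ℝ) : (n : ℕ) → (Fin n → X) → ℝ
  | 0 => fun _ => 1
  | n + 1 => fun y =>
      ff ω n (fun i => y i.castSucc) *
        (ω (y (Fin.last n)) - ∑ i : Fin n, if y i.castSucc = y (Fin.last n) then (1 : ℝ) else 0)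

/-- Dirac measure at `x`. -/
noncomputable def diracMeas (x : X) : X → ℝ := fun a => if a = x then 1 else 0

/-- The measure `δ_{x₁}+⋯+δ_{x_k}` of a multiset `[x₁,…,x_k]`. -/
noncomputable def msMeas {k : ℕ} (x : Fin k → X) : X → ℝ :=
  fun a => ((Finset.univ.filter (fun i => x i = a)).card : ℝ)

/-- Integration `⟨μ, f⟩` of a function against a measure on `X^n`. -/
noncomputable def pairing (n : ℕ) (μ f : (Fin n → X) → ℝ) : ℝ :=
  ∑ y : Fin n → X, μ y * f y

/-- Symmetrization of a function/measure on `X^n`. -/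
noncomputable def symmFun (n : ℕ) (μ : (Fin n → X) → ℝ) : (Fin n → X) → ℝ :=
  fun y => (∑ π : Equiv.Perm (Fin n), μ (y ∘ π)) / n.factorial

/-- Tensor product of measures/functions on `X^k` and `X^m`. -/
noncomputable def tensFun {k m : ℕ} (μ : (Fin k → X) → ℝ) (ν : (Fin m → X) → ℝ) :
    (Fin (k + m) → X) → ℝ :=
  fun y => μ (fun i => y (Fin.castAdd m i)) * ν (fun j => y (Fin.natAdd k j))

/-- Re-indexing along an equality of dimensions. -/
def castFun {m n : ℕ} (h : m = n) (μ : (Fin m → X) → ℝ) : (Fin n → X) → ℝ :=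
  fun y => μ (fun i => y (Fin.cast h i))

/-- The product measure `ω^{⊗n}` (and likewise the tensor power `ξ^{⊗n}` of a function). -/
noncomputable def prodMeas (ω : X → ℝ) (n : ℕ) : (Fin n → X) → ℝ :=
  fun y => ∏ i, ω (y i)

/-- A function on `X^n` is symmetric. -/
def IsSymmFun {n : ℕ} (f : (Fin n → X) → ℝ) : Prop :=
  ∀ (π : Equiv.Perm (Fin n)) (y : Fin n → X), f (y ∘ π) = f y

end Defs

/-- The set of surjections `Fin n → Fin k`; these correspond to set partitions of
`{1,…,n}` into `k` nonempty blocks together with an ordering of the blocks. -/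
noncomputable def surjs (n k : ℕ) : Finset (Fin n → Fin k) :=
  Finset.univ.filter (fun g => Function.Surjective g)

/-- Cardinality of the fiber `g⁻¹(i)` (the size of block `i`). -/
def fiberCard {n k : ℕ} (g : Fin n → Fin k) (i : Fin k) : ℕ :=
  (Finset.univ.filter (fun j => g j = i)).card

section Ops

variable {X : Type*} [Fintype X] [DecidableEq X]

/-- Stirling operator of the second kind `S(n,k) = Σ_{λ ∈ UP(n,k)} D_λ`:
summing the substitute-and-symmetrize operators over unordered partitions of `{1,…,n}`
into `k` nonempty blocks is the same as summing `f(y ∘ g)` over the surjections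
`g : Fin n → Fin k` and dividing by `k!`. -/
noncomputable def Sop (n k : ℕ) (f : (Fin n → X) → ℝ) : (Fin k → X) → ℝ :=
  fun y => (∑ g ∈ surjs n k, f (y ∘ g)) / k.factorial

/-- Unsigned Stirling operator of the first kind
`c(n,k) = Σ_{λ={λ₁,…,λ_k} ∈ UP(n,k)} (|λ₁|−1)!⋯(|λ_k|−1)! · D_λ`. -/
noncomputable def cop (n k : ℕ) (f : (Fin n → X) → ℝ) : (Fin k → X) → ℝ :=
  fun y => (∑ g ∈ surjs n k, (∏ i : Fin k, ((fiberCard g i - 1).factorial : ℝ)) * f (y ∘ g)) /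
    k.factorial

/-- Stirling operator of the first kind `s(n,k) = (−1)^{n−k} c(n,k)`. -/
noncomputable def sop (n k : ℕ) (f : (Fin n → X) → ℝ) : (Fin k → X) → ℝ :=
  fun y => (-1 : ℝ) ^ (n - k) * cop n k f y

/-- Lah operator `L(n,k) = Σ_{λ={λ₁,…,λ_k} ∈ UP(n,k)} |λ₁|!⋯|λ_k|! · D_λ`. -/
noncomputable def Lop (n k : ℕ) (f : (Fin n → X) → ℝ) : (Fin k → X) → ℝ :=
  fun y => (∑ g ∈ surjs n k, (∏ i : Fin k, ((fiberCard g i).factorial : ℝ)) * f (y ∘ g)) /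
    k.factorial

end Ops

/-- `Id^{(m)} ⊗ op`: apply an operator (from functions of `n` variables to functions of
`k` variables) to the last `n` variables, the first `m` variables being parameters. -/
def idTens {X : Type*} {m n k : ℕ}
    (op : ((Fin n → X) → ℝ) → ((Fin k → X) → ℝ)) (f : (Fin (m + n) → X) → ℝ) :
    (Fin (m + k) → X) → ℝ :=
  fun y => op (fun v => f (Fin.append (fun i => y (Fin.castAdd k i)) v))
    (fun j => y (Fin.natAdd m j))

/-- The operator `T_i = Σ_{k=1}^{n} S(k+m, i) ∘ Sym_{m+k}(Id^{(m)} ⊗ s(n,k))` from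
symmetric functions on `X^{m+n}` to symmetric functions on `X^i`. -/
noncomputable def olsonT {X : Type*} [Fintype X] [DecidableEq X] (m n : ℕ)
    (f : (Fin (m + n) → X) → ℝ) (i : ℕ) : (Fin i → X) → ℝ :=
  fun y => ∑ k ∈ Finset.Icc 1 n,
    Sop (k + m) i (castFun (Nat.add_comm m k) (symmFun (m + k) (idTens (sop n k) f))) y

/-! Absorbing the symmetrisation into the sum over surjections and composing a surjection of
`Fin (m + k)` with the index map of `Id^{(m)} ⊗ h` gives
`i! · T_i f(y) = Σ_σ c(σ) f(y ∘ σ)` over the surjections `σ : Fin (m + n) → Fin i`, where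
`c(σ) = Σ_k (-1)^(n-k) / k! · Σ_h ∏_j (|h⁻¹ j| - 1)!` runs over the surjections
`h : Fin n → Fin k` through which the restriction `ψ` of `σ` to the last `n` places factors.
Up to `k!` the inner sum counts the permutations with `k` cycles that preserve the fibres of `ψ`,
so `c(σ)` is the sum of the signs over the stabiliser of `ψ`: it is `1` if `ψ` is injective and
`0` otherwise (by induction on `n`: the first point either forms a new block or joins a block of
its own colour). Only the `σ` injective on the last block survive: there are none if `i < n` or
`i > m + n`, and for `i = n` they are a permutation of the last block together with an arbitrary
map on the first, which by symmetry of `f` gives the diagonal formula. -/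

open Function

instance {α β γ : Type*} [Fintype α] [DecidableEq β] [DecidableEq γ] (g : α → γ)
    (f : α → β) : Decidable (g.FactorsThrough f) :=
  inferInstanceAs (Decidable (∀ a b, f a = f b → g a = g b))

lemma mem_surjs {n k : ℕ} {g : Fin n → Fin k} : g ∈ surjs n k ↔ Surjective g := by
  simp [surjs]

lemma surjs_eq_empty {n k : ℕ} (h : n < k) : surjs n k = ∅ := by
  ext g
  simp only [mem_surjs, Finset.notMem_empty, iff_false]
  intro hg
  have := Fintype.card_le_of_surjective g hg
  simp only [Fintype.card_fin] at this
  omega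

lemma fiberCard_cons {n k : ℕ} (j : Fin k) (h : Fin n → Fin k) (t : Fin k) :
    fiberCard (Fin.cons j h : Fin (n + 1) → Fin k) t =
      fiberCard h t + if j = t then 1 else 0 := by
  simp only [fiberCard, Finset.card_filter, Fin.sum_univ_succ, Fin.cons_zero, Fin.cons_succ]
  exact add_comm _ _

lemma fiberCard_comp_of_injective {n k l : ℕ} {e : Fin k → Fin l} (he : Injective e)
    (h : Fin n → Fin k) (t : Fin k) : fiberCard (e ∘ h) (e t) = fiberCard h t := by
  simp [fiberCard, he.eq_iff]

lemma fiberCard_pos {n k : ℕ} {h : Fin n → Fin k} (hh : Surjective h) (t : Fin k) :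
    0 < fiberCard h t :=
  Finset.card_pos.2 ((hh t).imp fun a ha => by simpa using ha)

lemma fiberCard_succAbove_comp_self {n k : ℕ} (j : Fin (k + 1)) (h : Fin n → Fin k) :
    fiberCard (j.succAbove ∘ h) j = 0 := by
  simp [fiberCard, Fin.succAbove_ne]

def cycleWeight {n k : ℕ} (h : Fin n → Fin k) : ℝ :=
  ∏ t, ((fiberCard h t - 1).factorial : ℝ)

lemma cycleWeight_cons_of_surjective {n k : ℕ} {h : Fin n → Fin k} (hh : Surjective h)
    (j : Fin k) :
    cycleWeight (Fin.cons j h : Fin (n + 1) → Fin k) = fiberCard h j * cycleWeight h := by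
  unfold cycleWeight
  rw [← Finset.mul_prod_erase _ _ (Finset.mem_univ j),
    ← Finset.mul_prod_erase _ _ (Finset.mem_univ j), ← mul_assoc]
  congr 1
  · obtain ⟨c, hc⟩ := Nat.exists_eq_add_of_lt (fiberCard_pos hh j)
    simp [fiberCard_cons, hc, Nat.factorial_succ]
  · refine Finset.prod_congr rfl fun t ht => ?_
    simp [fiberCard_cons, (Finset.ne_of_mem_erase ht).symm]

lemma cycleWeight_cons_succAbove {n k : ℕ} (j : Fin (k + 1)) (h : Fin n → Fin k) :
    cycleWeight (Fin.cons j (j.succAbove ∘ h) : Fin (n + 1) → Fin (k + 1)) = cycleWeight h := by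
  unfold cycleWeight
  rw [Fin.prod_univ_succAbove _ j]
  simp [fiberCard_cons, fiberCard_succAbove_comp_self,
    fiberCard_comp_of_injective Fin.succAbove_right_injective, (Fin.succAbove_ne j _).symm]

lemma factorsThrough_cons_iff {n : ℕ} {α β : Type*} {c : α} {ψ : Fin n → α} {j : β}
    {h : Fin n → β} :
    (Fin.cons c ψ : Fin (n + 1) → α).FactorsThrough (Fin.cons j h) ↔
      ψ.FactorsThrough h ∧ ∀ a, h a = j → ψ a = c := by
  constructor
  · intro H
    exact ⟨fun a b hab => by simpa using @H a.succ b.succ (by simpa using hab),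
      fun a ha => by simpa using @H a.succ 0 (by simpa using ha)⟩
  · rintro ⟨H, Hj⟩ a b hab
    cases a using Fin.cases <;> cases b using Fin.cases <;>
      simp only [Fin.cons_zero, Fin.cons_succ] at hab ⊢
    exacts [(Hj _ hab.symm).symm, Hj _ hab, H hab]

section RefiningWeight

variable {ι : Type*} [DecidableEq ι]

noncomputable def refiningWeight (n k : ℕ) (ψ : Fin n → ι) : ℝ :=
  ∑ h ∈ surjs n k with ψ.FactorsThrough h, cycleWeight h

lemma refiningWeight_zero_zero (ψ : Fin 0 → ι) : refiningWeight 0 0 ψ = 1 := by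
  simp [refiningWeight, surjs, cycleWeight, FactorsThrough, Surjective]

lemma refiningWeight_succ_zero (n : ℕ) (ψ : Fin (n + 1) → ι) :
    refiningWeight (n + 1) 0 ψ = 0 := by
  simp [refiningWeight, surjs]

lemma refiningWeight_of_lt {n k : ℕ} (h : n < k) (ψ : Fin n → ι) :
    refiningWeight n k ψ = 0 := by
  simp [refiningWeight, surjs_eq_empty h]

lemma sum_fiberCard_of_factorsThrough {n k : ℕ} {h : Fin n → Fin k} {ψ : Fin n → ι}
    (hψ : ψ.FactorsThrough h) (c : ι) :
    ∑ j, (if ∀ a, h a = j → ψ a = c then fiberCard h j else 0) = #{a | ψ a = c} := by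
  rw [card_eq_sum_card_fiberwise (f := h) (t := univ) (fun _ _ => mem_univ _)]
  refine Finset.sum_congr rfl fun j _ => ?_
  split_ifs with hj
  · unfold fiberCard
    congr 1
    ext a
    simp only [mem_filter, mem_univ, true_and]
    exact ⟨fun ha => ⟨hj a ha, ha⟩, And.right⟩
  · push Not at hj
    obtain ⟨a₀, ha₀, hc⟩ := hj
    refine (Finset.card_eq_zero.2 (Finset.filter_eq_empty_iff.2 ?_)).symm
    intro a ha hja
    exact hc ((hψ (ha₀.trans hja.symm)).trans (mem_filter.1 ha).2)

lemma factorsThrough_comp_left_iff {α β γ δ : Type*} {e : β → δ} (he : Injective e)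
    {g : α → γ} {f : α → β} : g.FactorsThrough (e ∘ f) ↔ g.FactorsThrough f :=
  forall₂_congr fun _ _ => imp_congr_left he.eq_iff

lemma sum_cons_surjective_not_surjective {M : Type*} [AddCommMonoid M] {n k : ℕ}
    (j : Fin (k + 1)) (G : (Fin n → Fin (k + 1)) → M) :
    ∑ h with Surjective (Fin.cons j h : Fin (n + 1) → Fin (k + 1)) ∧ ¬ Surjective h, G h
      = ∑ h ∈ surjs n k, G (j.succAbove ∘ h) := by
  refine Eq.trans ?_ (Finset.sum_map (surjs n k) ⟨_, Fin.succAbove_right_injective.comp_left⟩ G)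
  congr 1
  ext h
  simp only [mem_filter, mem_univ, true_and, mem_map, mem_surjs, Embedding.coeFn_mk]
  constructor
  · rintro ⟨hcons, hh⟩
    have hne : ∀ a, h a ≠ j := by
      refine fun a ha => hh fun t => ?_
      obtain ⟨b, hb⟩ := hcons t
      cases b using Fin.cases with
      | zero => exact ⟨a, ha.trans hb⟩
      | succ b => exact ⟨b, hb⟩
    choose h' hh' using fun a => Fin.exists_succAbove_eq (hne a)
    refine ⟨h', fun t => ?_, funext hh'⟩
    obtain ⟨b, hb⟩ := hcons (j.succAbove t)
    cases b using Fin.cases with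
    | zero => exact absurd hb.symm (Fin.succAbove_ne j t)
    | succ b => exact ⟨b, Fin.succAbove_right_injective ((hh' b).trans hb)⟩
  · rintro ⟨h', hh', rfl⟩
    refine ⟨fun t => ?_, fun hs => ?_⟩
    · rcases eq_or_ne t j with rfl | ht
      · exact ⟨0, rfl⟩
      · obtain ⟨t', rfl⟩ := Fin.exists_succAbove_eq ht
        obtain ⟨a, rfl⟩ := hh' t'
        exact ⟨a.succ, rfl⟩
    · obtain ⟨a, ha⟩ := hs j
      exact Fin.succAbove_ne j _ ha

lemma refiningWeight_succ_succ (n k : ℕ) (c : ι) (ψ : Fin n → ι) :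
    refiningWeight (n + 1) (k + 1) (Fin.cons c ψ) =
      (k + 1) * refiningWeight n k ψ + #{a | ψ a = c} * refiningWeight n (k + 1) ψ := by
  set G : Fin (k + 1) → (Fin n → Fin (k + 1)) → ℝ := fun j h =>
    if (Fin.cons c ψ : Fin (n + 1) → ι).FactorsThrough (Fin.cons j h) then
      cycleWeight (Fin.cons j h : Fin (n + 1) → Fin (k + 1)) else 0
  have hcons : refiningWeight (n + 1) (k + 1) (Fin.cons c ψ) =
      ∑ j, ∑ h with Surjective (Fin.cons j h : Fin (n + 1) → Fin (k + 1)), G j h := by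
    rw [refiningWeight, surjs, Finset.filter_filter, Finset.sum_filter,
      ← (Fin.consEquiv fun _ => Fin (k + 1)).sum_comp, Fintype.sum_prod_type]
    simp only [Finset.sum_filter, G, ite_and]
    rfl
  have hsplit : ∀ j, ∑ h with Surjective (Fin.cons j h : Fin (n + 1) → Fin (k + 1)), G j h =
      ∑ h ∈ surjs n (k + 1), G j h + ∑ h ∈ surjs n k, G j (j.succAbove ∘ h) := by
    intro j
    rw [← Finset.sum_filter_add_sum_filter_not _ (fun h : Fin n → Fin (k + 1) => Surjective h),
      Finset.filter_filter, Finset.filter_filter, ← sum_cons_surjective_not_surjective]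
    congr 2
    ext h
    simp only [mem_filter, mem_univ, true_and, mem_surjs, and_iff_right_iff_imp]
    intro hh t
    obtain ⟨a, ha⟩ := hh t
    exact ⟨a.succ, ha⟩
  have hjoin :
      ∑ j, ∑ h ∈ surjs n (k + 1), G j h = #{a | ψ a = c} * refiningWeight n (k + 1) ψ := by
    rw [Finset.sum_comm, refiningWeight, Finset.sum_filter, Finset.mul_sum]
    refine Finset.sum_congr rfl fun h hh => ?_
    have hh := mem_surjs.1 hh
    simp only [G, factorsThrough_cons_iff, cycleWeight_cons_of_surjective hh, ite_and]
    split_ifs with hψ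
    · rw [← sum_fiberCard_of_factorsThrough hψ c, Nat.cast_sum, Finset.sum_mul]
      simp only [Nat.cast_ite, Nat.cast_zero, ite_mul, zero_mul]
    · simp
  have hnew : ∀ j, ∑ h ∈ surjs n k, G j (j.succAbove ∘ h) = refiningWeight n k ψ := by
    intro j
    rw [refiningWeight, Finset.sum_filter]
    refine Finset.sum_congr rfl fun h _ => ?_
    simp only [G, factorsThrough_cons_iff, cycleWeight_cons_succAbove,
      factorsThrough_comp_left_iff Fin.succAbove_right_injective, Function.comp_apply,
      Fin.succAbove_ne, false_imp_iff, implies_true, and_true]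
  rw [hcons, Finset.sum_congr rfl fun j _ => hsplit j, Finset.sum_add_distrib, hjoin,
    Finset.sum_congr rfl fun j _ => hnew j]
  simp only [Finset.sum_const, card_univ, Fintype.card_fin, nsmul_eq_mul]
  push_cast
  ring

end RefiningWeight

section Alternating

variable {ι : Type*} [DecidableEq ι]

lemma one_sub_card_mul_ite_injective {n : ℕ} (c : ι) (ψ : Fin n → ι) :
    (1 - #{a | ψ a = c} : ℝ) * (if Injective ψ then 1 else 0) =
      if Injective (Fin.cons c ψ : Fin (n + 1) → ι) then 1 else 0 := by
  by_cases hψ : Injective ψ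
  · by_cases hc : c ∈ Set.range ψ
    · obtain ⟨a₀, rfl⟩ := hc
      simp [hψ.eq_iff, Fin.cons_injective_iff, Finset.filter_eq']
    · have : #{a | ψ a = c} = 0 :=
        Finset.card_eq_zero.2 (Finset.filter_eq_empty_iff.2 fun a _ ha => hc ⟨a, ha⟩)
      simp [this, hψ, hc, Fin.cons_injective_iff]
  · simp [hψ, Fin.cons_injective_iff]

lemma sum_range_refiningWeight_succ (n : ℕ) (ψ : Fin n → ι) :
    ∑ k ∈ range (n + 1),
        (-1 : ℝ) ^ (n - k) / (k + 1).factorial * refiningWeight n (k + 1) ψ =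
      (-1) ^ n * refiningWeight n 0 ψ -
        ∑ k ∈ range (n + 1), (-1 : ℝ) ^ (n - k) / k.factorial * refiningWeight n k ψ := by
  rw [Finset.sum_range_succ, refiningWeight_of_lt (Nat.lt_succ_self n), Finset.sum_range_succ']
  simp only [mul_zero, add_zero, Nat.sub_zero, Nat.factorial_zero, Nat.cast_one, div_one]
  rw [sub_add_cancel_right, ← Finset.sum_neg_distrib]
  refine Finset.sum_congr rfl fun k hk => ?_
  rw [show n - k = n - (k + 1) + 1 by have := Finset.mem_range.1 hk; omega, pow_succ]
  ring

theorem sum_range_alternating_refiningWeight (n : ℕ) (ψ : Fin n → ι) :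
    ∑ k ∈ range (n + 1), (-1 : ℝ) ^ (n - k) / k.factorial * refiningWeight n k ψ =
      if Injective ψ then 1 else 0 := by
  induction n with
  | zero => simp [refiningWeight_zero_zero, Injective]
  | succ n ih =>
    cases ψ using Fin.consCases with
    | cons c ψ =>
    have hN : (#{a | ψ a = c} : ℝ) * refiningWeight n 0 ψ = 0 := by
      cases n with
      | zero => simp
      | succ n => rw [refiningWeight_succ_zero, mul_zero]
    calc _ = ∑ k ∈ range (n + 1), ((-1 : ℝ) ^ (n - k) / k.factorial * refiningWeight n k ψ +
          #{a | ψ a = c} *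
            ((-1 : ℝ) ^ (n - k) / (k + 1).factorial * refiningWeight n (k + 1) ψ)) := by
          rw [Finset.sum_range_succ', refiningWeight_succ_zero, mul_zero, add_zero]
          refine Finset.sum_congr rfl fun k _ => ?_
          rw [refiningWeight_succ_succ, Nat.add_sub_add_right, Nat.factorial_succ]
          push_cast
          field_simp
      _ = (1 - #{a | ψ a = c}) * if Injective ψ then 1 else 0 := by
          rw [Finset.sum_add_distrib, ← Finset.mul_sum, sum_range_refiningWeight_succ, ih,
            mul_sub, mul_left_comm, hN]
          ring
      _ = _ := one_sub_card_mul_ite_injective c ψ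

theorem sum_Icc_alternating_refiningWeight {n : ℕ} (hn : 1 ≤ n) (ψ : Fin n → ι) :
    ∑ k ∈ Icc 1 n, (-1 : ℝ) ^ (n - k) / k.factorial * refiningWeight n k ψ =
      if Injective ψ then 1 else 0 := by
  obtain ⟨n, rfl⟩ := Nat.exists_eq_add_of_le' hn
  rw [← sum_range_alternating_refiningWeight, Finset.range_eq_Ico, Finset.sum_eq_sum_Ico_succ_bot
    (Nat.succ_pos _), refiningWeight_succ_zero, mul_zero, zero_add]
  rfl

end Alternating

section Reduction

variable {X : Type*}

def idAppend (m : ℕ) {n k : ℕ} (h : Fin n → Fin k) : Fin (m + n) → Fin (m + k) :=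
  Fin.append (Fin.castAdd k) (Fin.natAdd m ∘ h)

lemma comp_idAppend {α : Type*} {m n k : ℕ} (u : Fin (m + k) → α) (h : Fin n → Fin k) :
    u ∘ idAppend m h = Fin.append (u ∘ Fin.castAdd k) (u ∘ Fin.natAdd m ∘ h) := by
  funext a
  cases a using Fin.addCases <;> simp [idAppend]

lemma idAppend_surjective {m n k : ℕ} {h : Fin n → Fin k} (hh : Surjective h) :
    Surjective (idAppend m h) := by
  intro t
  cases t using Fin.addCases with
  | left s => exact ⟨Fin.castAdd n s, by simp [idAppend]⟩
  | right s =>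
    obtain ⟨a, rfl⟩ := hh s
    exact ⟨Fin.natAdd m a, by simp [idAppend]⟩

lemma factorsThrough_idAppend_iff {β : Type*} {m n k : ℕ} {σ : Fin (m + n) → β}
    {h : Fin n → Fin k} :
    σ.FactorsThrough (idAppend m h) ↔ (σ ∘ Fin.natAdd m).FactorsThrough h := by
  refine ⟨fun H a b hab => H (by simp [idAppend, hab]), fun H a b hab => ?_⟩
  cases a using Fin.addCases <;> cases b using Fin.addCases <;>
    simp only [idAppend, Fin.append_left, Fin.append_right, comp_apply, Fin.ext_iff,
      Fin.val_castAdd, Fin.val_natAdd, Nat.add_left_cancel_iff] at hab ⊢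
  all_goals first | rw [Fin.ext hab] | omega | exact H (Fin.ext hab)

lemma sum_surjs_comp {M : Type*} [AddCommMonoid M] {n p i : ℕ} {e : Fin n → Fin p}
    (he : Surjective e) (F : (Fin n → Fin i) → M) :
    ∑ g ∈ surjs p i, F (g ∘ e) = ∑ σ ∈ surjs n i with σ.FactorsThrough e, F σ := by
  have hσ : ∀ σ : Fin n → Fin i, σ.FactorsThrough e → (σ ∘ surjInv he) ∘ e = σ :=
    fun σ hσ => funext fun a => hσ (surjInv_eq he (e a))
  refine Finset.sum_nbij' (· ∘ e) (· ∘ surjInv he) (fun g hg => ?_) (fun σ hσ' => ?_)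
    (fun g _ => ?_) (fun σ hσ' => hσ σ (mem_filter.1 hσ').2) fun _ _ => rfl
  · simp only [mem_filter, mem_surjs] at hg ⊢
    exact ⟨hg.comp he, fun a b hab => congrArg g hab⟩
  · simp only [mem_filter, mem_surjs] at hσ' ⊢
    refine fun t => ?_
    obtain ⟨a, rfl⟩ := hσ'.1 t
    exact ⟨e a, congrFun (hσ σ hσ'.2) a⟩
  · exact funext fun b => congrArg g (surjInv_eq he b)

lemma Sop_castFun_symmFun {a b i : ℕ} (hab : a = b) (K : (Fin a → X) → ℝ)
    (y : Fin i → X) :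
    Sop b i (castFun hab (symmFun a K)) y = (∑ σ ∈ surjs a i, K (y ∘ σ)) / i.factorial := by
  have hperm : ∀ π : Equiv.Perm (Fin a),
      ∑ g ∈ surjs b i, K (y ∘ (g ∘ (Fin.cast hab ∘ π))) =
        ∑ σ ∈ surjs a i, K (y ∘ σ) := by
    intro π
    have he : Bijective (Fin.cast hab ∘ π) := (finCongr hab).bijective.comp π.bijective
    have := sum_surjs_comp he.2 fun σ => K (y ∘ σ)
    rwa [Finset.filter_true_of_mem fun σ _ => he.1.factorsThrough σ] at this
  simp only [Sop, castFun, symmFun]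
  rw [← Finset.sum_div, Finset.sum_comm]
  simp only [Function.comp_def] at hperm ⊢
  simp only [hperm, Finset.sum_const, card_univ, Fintype.card_perm, Fintype.card_fin,
    nsmul_eq_mul]
  field_simp

lemma idTens_sop_apply {m n k : ℕ} (f : (Fin (m + n) → X) → ℝ) (u : Fin (m + k) → X) :
    idTens (sop n k) f u = (-1) ^ (n - k) / k.factorial *
      ∑ h ∈ surjs n k, cycleWeight h * f (u ∘ idAppend m h) := by
  simp only [comp_idAppend]
  simp only [idTens, sop, cop, cycleWeight, Function.comp_def]
  ring

lemma Sop_symmFun_idTens_sop {m n k i : ℕ} (f : (Fin (m + n) → X) → ℝ) (y : Fin i → X) :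
    Sop (k + m) i (castFun (Nat.add_comm m k) (symmFun (m + k) (idTens (sop n k) f))) y =
      (-1) ^ (n - k) / k.factorial * (∑ h ∈ surjs n k, cycleWeight h *
        ∑ σ ∈ surjs (m + n) i with (σ ∘ Fin.natAdd m).FactorsThrough h, f (y ∘ σ)) /
          i.factorial := by
  simp only [Sop_castFun_symmFun, idTens_sop_apply, ← Finset.mul_sum, Function.comp_assoc]
  rw [Finset.sum_comm]
  congr 2
  refine Finset.sum_congr rfl fun h hh => ?_
  have := sum_surjs_comp (idAppend_surjective (m := m) (mem_surjs.1 hh)) fun σ => f (y ∘ σ)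
  simp only [factorsThrough_idAppend_iff] at this
  rw [← Finset.mul_sum, this]

theorem olsonT_apply [Fintype X] [DecidableEq X] {m n : ℕ} (hn : 1 ≤ n)
    (f : (Fin (m + n) → X) → ℝ) (i : ℕ) (y : Fin i → X) :
    olsonT m n f i y =
      (∑ σ ∈ surjs (m + n) i with Injective (σ ∘ Fin.natAdd m), f (y ∘ σ)) /
        i.factorial := by
  simp only [olsonT, Sop_symmFun_idTens_sop, ← Finset.sum_div]
  congr 1
  calc _ = ∑ σ ∈ surjs (m + n) i, (∑ k ∈ Icc 1 n, (-1) ^ (n - k) / k.factorial *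
        refiningWeight n k (σ ∘ Fin.natAdd m)) * f (y ∘ σ) := by
        simp only [refiningWeight, Finset.sum_filter, Finset.mul_sum, Finset.sum_mul]
        rw [Finset.sum_congr rfl fun k _ => Finset.sum_comm, Finset.sum_comm]
        refine Finset.sum_congr rfl fun σ _ => Finset.sum_congr rfl fun k _ =>
          Finset.sum_congr rfl fun h _ => ?_
        split_ifs <;> ring
    _ = _ := by
        simp only [sum_Icc_alternating_refiningWeight hn, Finset.sum_filter, ite_mul, one_mul,
          zero_mul]

end Reduction

section Symmetric

variable {X : Type*}

lemma IsSymmFun.apply_comp_of_bijective {n : ℕ} {f : (Fin n → X) → ℝ} (hf : IsSymmFun f)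
    {τ : Fin n → Fin n} (hτ : Bijective τ) (y : Fin n → X) : f (y ∘ τ) = f y :=
  hf (Equiv.ofBijective τ hτ) y

lemma append_comp_finAddFlip {α : Type*} {m n : ℕ} (u : Fin m → α) (v : Fin n → α) :
    Fin.append u v ∘ finAddFlip = Fin.append v u := by
  funext a
  cases a using Fin.addCases <;> simp [finAddFlip_apply_castAdd, finAddFlip_apply_natAdd]

lemma IsSymmFun.apply_append_cast {m n : ℕ} {f : (Fin (m + n) → X) → ℝ} (hf : IsSymmFun f)
    (u : Fin n → X) (v : Fin m → X) :
    f (fun t => Fin.append u v (Fin.cast (Nat.add_comm m n) t)) = f (Fin.append v u) := by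
  rw [← append_comp_finAddFlip v u]
  exact hf.apply_comp_of_bijective (τ := finAddFlip ∘ Fin.cast (Nat.add_comm m n))
    (finAddFlip.bijective.comp (finCongr (Nat.add_comm m n)).bijective) _

lemma card_filter_injective_fin (n : ℕ) : #{B : Fin n → Fin n | Injective B} = n.factorial := by
  rw [← Fintype.card_subtype, Fintype.card_congr (Equiv.subtypeInjectiveEquivEmbedding _ _),
    Fintype.card_embedding_eq, Fintype.card_fin, Nat.descFactorial_self]

lemma IsSymmFun.sum_surjs_injective_natAdd {m n : ℕ} {f : (Fin (m + n) → X) → ℝ}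
    (hf : IsSymmFun f) (x : Fin n → X) :
    ∑ σ ∈ surjs (m + n) n with Injective (σ ∘ Fin.natAdd m), f (x ∘ σ) =
      n.factorial * ∑ j : Fin m → Fin n, f (Fin.append (x ∘ j) x) := by
  have hfilter : {σ ∈ surjs (m + n) n | Injective (σ ∘ Fin.natAdd m)} =
      ({σ | Injective (σ ∘ Fin.natAdd m)} : Finset (Fin (m + n) → Fin n)) := by
    ext σ
    simp only [mem_filter, mem_surjs, mem_univ, true_and, and_iff_right_iff_imp]
    exact fun hσ => (Finite.injective_iff_surjective.1 hσ).of_comp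
  have hperm : ∀ (j : Fin m → Fin n) (B : Fin n → Fin n), Injective B →
      f (x ∘ Fin.append j B) = f (Fin.append (x ∘ j) x) := by
    intro j B hB
    have hbij : Bijective (idAppend m B) := Finite.surjective_iff_bijective.1
      (idAppend_surjective (Finite.injective_iff_surjective.1 hB))
    rw [← hf.apply_comp_of_bijective hbij (Fin.append (x ∘ j) x), comp_idAppend]
    congr 1
    funext a
    cases a using Fin.addCases <;> simp
  rw [hfilter, Finset.sum_filter, ← (Fin.appendEquiv m n).sum_comp, Fintype.sum_prod_type,
    Finset.mul_sum]
  refine Finset.sum_congr rfl fun j _ => ?_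
  have hright : ∀ B : Fin n → Fin n, Fin.append j B ∘ Fin.natAdd m = B := fun B => by
    funext a
    simp
  change ∑ B, (if Injective (Fin.append j B ∘ Fin.natAdd m) then
    f (x ∘ Fin.append j B) else 0) = _
  simp only [hright]
  rw [← Finset.sum_filter, Finset.sum_congr rfl fun B hB => hperm j B (mem_filter.1 hB).2,
    Finset.sum_const, card_filter_injective_fin, nsmul_eq_mul]

end Symmetric

theorem olson_identity_general
    {X : Type*} [Fintype X] [DecidableEq X] {m n : ℕ} (hn : 1 ≤ n)
    (f : (Fin (m + n) → X) → ℝ) (hf : IsSymmFun f) :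
    (∀ i : ℕ, 1 ≤ i → (i < n ∨ m + n < i) → ∀ y : Fin i → X, olsonT m n f i y = 0)
    ∧ (∀ x : Fin n → X,
        olsonT m n f n x
          = ∑ j : Fin m → Fin n,
              f (fun t => Fin.append x (fun s => x (j s)) (Fin.cast (Nat.add_comm m n) t))) := by
  refine ⟨fun i _ hi y => ?_, fun x => ?_⟩
  · rw [olsonT_apply hn, Finset.sum_eq_zero, zero_div]
    intro σ hσ
    simp only [mem_filter, mem_surjs] at hσ
    have hinj := Fintype.card_le_of_injective _ hσ.2
    have hsurj := Fintype.card_le_of_surjective _ hσ.1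
    simp only [Fintype.card_fin] at hinj hsurj
    omega
  · rw [olsonT_apply hn, hf.sum_surjs_injective_natAdd,
      mul_div_cancel_left₀ _ (Nat.cast_ne_zero.2 n.factorial_ne_zero)]
    exact Finset.sum_congr rfl fun j _ => (hf.apply_append_cast x (x ∘ j)).symm

/-- Infinite-dimensional Olson's identity, vanishing and diagonal cases:
with `l = m+n` and `f : X^l → ℝ` symmetric, (a) `T_i f = 0` whenever `i < n` or `i > l`;
(b) `(T_n f)(x₁,…,x_n) = Σ_{j₁,…,j_m=1}^{n} f(x₁,…,x_n, x_{j₁},…,x_{j_m})`. -/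
theorem olson_identity
    {X : Type*} [Fintype X] [DecidableEq X] {m n : ℕ} (hm : 1 ≤ m) (hn : 1 ≤ n)
    (f : (Fin (m + n) → X) → ℝ) (hf : IsSymmFun f) :
    (∀ i : ℕ, 1 ≤ i → (i < n ∨ m + n < i) → ∀ y : Fin i → X, olsonT m n f i y = 0)
    ∧ (∀ x : Fin n → X,
        olsonT m n f n x
          = ∑ j : Fin m → Fin n,
              f (fun t => Fin.append x (fun s => x (j s)) (Fin.cast (Nat.add_comm m n) t))) :=
  olson_identity_general hn f hf
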